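/- Let U = T_D and let L be a relative involutive division on U. Let M_set ⊆ U and let J = { u + v | u ∈ M_set, v : Fin n → ℕ } be the semigroup ideal generated by M_set. Then J = ⋃_{l ∈ M_set} C(l) if and only if M_set is compliant, i.e. for all s, t ∈ U with t ∈ M_set, the unique element X(s,t) of U whose cone contains lcm(s,t) also belongs to M_set. -/

import Mathlib

/-!
Write `J` for the ideal generated by `Mset`. Every cone `C(l)` with `l ∈ Mset` lies in `J`, so the
question is whether every `w ∈ J` lies in a cone with apex in `Mset`.

If it does, take `s` arbitrary and `t ∈ Mset`: `lcm(s,t) ∈ J` lies in `C(l)` for some `l ∈ Mset`,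
and disjointness of the cones forces `X(s,t) = l`.

Conversely, let `w = u + v` with `u ∈ Mset`, and let `x` be the apex of the cone containing `w`
(covering). A cone `C(x)` contains every `y` with `x ≤ y ≤ w` once it contains `w`, so it contains
`lcm(x,u) ≤ w`; hence `x = X(x,u) ∈ Mset` by compliance.
-/

/-- The degree of an exponent vector: the sum of the exponents. -/
def deg {n : ℕ} (u : Fin n → ℕ) : ℕ := ∑ i, u i

/-- The support of an exponent vector: the indices with nonzero exponent. -/
def supp {n : ℕ} (u : Fin n → ℕ) : Set (Fin n) := {i | u i ≠ 0}

/-- Given an assignment `M` of multiplicative variables, the cone of `u` is the set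
of all `u + v` where the support of `v` is contained in `M u`. -/
def cone {n : ℕ} (M : (Fin n → ℕ) → Set (Fin n)) (u : Fin n → ℕ) :
    Set (Fin n → ℕ) :=
  {w | ∃ v : Fin n → ℕ, supp v ⊆ M u ∧ w = u + v}

section Cone

variable {n : ℕ} {M : (Fin n → ℕ) → Set (Fin n)}

theorem deg_add (u v : Fin n → ℕ) : deg (u + v) = deg u + deg v :=
  Finset.sum_add_distrib

theorem supp_mono {u v : Fin n → ℕ} (h : u ≤ v) : supp u ⊆ supp v := fun i hi =>
  (Nat.pos_of_ne_zero hi |>.trans_le (h i)).ne'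

theorem mem_cone_iff {x w : Fin n → ℕ} :
    w ∈ cone M x ↔ x ≤ w ∧ supp (w - x) ⊆ M x := by
  constructor
  · rintro ⟨v, hv, rfl⟩
    exact ⟨le_self_add, by rwa [add_tsub_cancel_left]⟩
  · rintro ⟨hxw, hsupp⟩
    exact ⟨w - x, hsupp, (add_tsub_cancel_of_le hxw).symm⟩

theorem mem_cone_of_le_of_le {x y w : Fin n → ℕ}
    (hxy : x ≤ y) (hyw : y ≤ w) (hw : w ∈ cone M x) : y ∈ cone M x := by
  rw [mem_cone_iff] at hw ⊢
  exact ⟨hxy, (supp_mono (tsub_le_tsub_right hyw x)).trans hw.2⟩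

theorem sup_mem_cone {x u w : Fin n → ℕ}
    (hu : u ≤ w) (hw : w ∈ cone M x) : x ⊔ u ∈ cone M x :=
  mem_cone_of_le_of_le le_sup_left (sup_le (mem_cone_iff.1 hw).1 hu) hw

theorem mem_ideal_of_le {S : Set (Fin n → ℕ)} {u w : Fin n → ℕ} (hu : u ∈ S) (h : u ≤ w) :
    ∃ u ∈ S, ∃ v : Fin n → ℕ, w = u + v :=
  ⟨u, hu, w - u, (add_tsub_cancel_of_le h).symm⟩

theorem iUnion_cone_subset_ideal (M : (Fin n → ℕ) → Set (Fin n)) (S : Set (Fin n → ℕ)) :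
    (⋃ l ∈ S, cone M l) ⊆ {w | ∃ u ∈ S, ∃ v : Fin n → ℕ, w = u + v} := by
  intro w hw
  obtain ⟨l, hl, v, -, rfl⟩ := Set.mem_iUnion₂.1 hw
  exact ⟨l, hl, v, rfl⟩

end Cone

theorem ideal_eq_union_cones_iff_compliant_general (n D : ℕ)
    (M : (Fin n → ℕ) → Set (Fin n))
    (hcov : (⋃ u ∈ {u : Fin n → ℕ | deg u = D}, cone M u) =
      {w : Fin n → ℕ | D ≤ deg w})
    (hdisj : ∀ u v : Fin n → ℕ, deg u = D → deg v = D → u ≠ v →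
      cone M u ∩ cone M v = ∅)
    (Mset : Set (Fin n → ℕ)) (hMset : Mset ⊆ {u : Fin n → ℕ | deg u = D}) :
    {w : Fin n → ℕ | ∃ u ∈ Mset, ∃ v : Fin n → ℕ, w = u + v} =
        (⋃ l ∈ Mset, cone M l) ↔
      (∀ s t : Fin n → ℕ, deg s = D → t ∈ Mset →
        ∀ x : Fin n → ℕ, deg x = D → (s ⊔ t) ∈ cone M x → x ∈ Mset) := by
  constructor
  · intro hJ s t _ ht x hx hxc
    have hlcm : s ⊔ t ∈ ⋃ l ∈ Mset, cone M l := hJ ▸ mem_ideal_of_le ht le_sup_right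
    obtain ⟨l, hl, hcl⟩ := Set.mem_iUnion₂.1 hlcm
    by_contra hxl
    have hx_ne : x ≠ l := fun h => hxl (h ▸ hl)
    exact (hdisj x l hx (hMset hl) hx_ne).subset ⟨hxc, hcl⟩
  · intro hcomp
    refine Set.Subset.antisymm ?_ (iUnion_cone_subset_ideal M Mset)
    rintro _ ⟨u, hu, v, rfl⟩
    have hdeg : D ≤ deg (u + v) := by rw [deg_add, hMset hu]; exact Nat.le_add_right _ _
    obtain ⟨x, hx, hux⟩ := Set.mem_iUnion₂.1 (hcov.ge hdeg)
    exact Set.mem_iUnion₂.2 ⟨x, hcomp x u hx hu x hx (sup_mem_cone le_self_add hux), hux⟩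

/-- Let `L` be a relative involutive division on `U = T_D`, `Mset ⊆ U` and `J`
the semigroup ideal generated by `Mset`. Then `J` equals the union of the cones
of the elements of `Mset` iff `Mset` is compliant: for all `s, t ∈ U` with
`t ∈ Mset`, the unique element `X(s,t)` of `U` whose cone contains `lcm(s,t)`
(the pointwise maximum `s ⊔ t`) also belongs to `Mset`. -/
theorem ideal_eq_union_cones_iff_compliant (n D : ℕ) (hn : 1 ≤ n) (hD : 1 ≤ D)
    (M : (Fin n → ℕ) → Set (Fin n))
    (hcov : (⋃ u ∈ {u : Fin n → ℕ | deg u = D}, cone M u) =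
      {w : Fin n → ℕ | D ≤ deg w})
    (hdisj : ∀ u v : Fin n → ℕ, deg u = D → deg v = D → u ≠ v →
      cone M u ∩ cone M v = ∅)
    (Mset : Set (Fin n → ℕ)) (hMset : Mset ⊆ {u : Fin n → ℕ | deg u = D}) :
    {w : Fin n → ℕ | ∃ u ∈ Mset, ∃ v : Fin n → ℕ, w = u + v} =
        (⋃ l ∈ Mset, cone M l) ↔
      (∀ s t : Fin n → ℕ, deg s = D → t ∈ Mset →
        ∀ x : Fin n → ℕ, deg x = D → (s ⊔ t) ∈ cone M x → x ∈ Mset) :=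
  ideal_eq_union_cones_iff_compliant_general n D M hcov hdisj Mset hMset
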